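/- Let Γ be a finite simple graph with clique number m (the largest size of a set of pairwise adjacent vertices). Then the group cohomology of A_Γ in degree m with coefficients in ℤ with the trivial A_Γ-action is nonzero: H^m(A_Γ; ℤ) ≠ 0. (Together with the vanishing of H^k(A_Γ; M) for all k > m and all coefficient modules M, this says that the cohomological dimension of A_Γ equals the clique number of Γ, which equals the dimension of the Salvetti complex S_Γ.) -/

import Mathlib

/-- The commutator relators of a right-angled Artin group: one commutator
`v * w * v⁻¹ * w⁻¹` for each edge `{v, w}` of `Γ`. -/
def raagRels {V : Type} (Γ : SimpleGraph V) : Set (FreeGroup V) :=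
  {r | ∃ v w : V, Γ.Adj v w ∧
    r = FreeGroup.of v * FreeGroup.of w * (FreeGroup.of v)⁻¹ * (FreeGroup.of w)⁻¹}

/-- The right-angled Artin group of a (finite simple) graph `Γ`: the group presented
by the vertices of `Γ` with commutation relators for the edges. -/
abbrev RAAG {V : Type} (Γ : SimpleGraph V) : Type := PresentedGroup (raagRels Γ)

/-!
Enumerate an `m`-clique as `v 0, …, v (m - 1)`. The generators `x i = v i` pairwise commute, so
the alternating sum `∑ σ, sign σ • [x (σ 0) | ⋯ | x (σ (m - 1))]`, the image of the fundamental
class of the `m`-torus, is a cycle of the bar complex: pairing with it kills coboundaries. The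
exponent sums `φ i : A_Γ → ℤ` of the `v i` are `1`-cocycles, and the pairing of their cup product
with that cycle is `det (φ i (x j)) = det 1 = 1`, so the cup product is not a coboundary.
-/

open Finset Equiv CategoryTheory Limits

lemma HomologicalComplex.not_isZero_homology_of_notMem_range {R ι : Type*} [Ring R]
    {c : ComplexShape ι} (C : HomologicalComplex (ModuleCat R) c) {i j k : ι}
    (hi : c.prev j = i) (hk : c.next j = k) {x : C.X j} (hx : C.d j k x = 0)
    (hrange : x ∉ LinearMap.range (C.d i j).hom) : ¬ IsZero (C.homology j) := by
  rw [← exactAt_iff_isZero_homology, exactAt_iff' _ _ _ _ hi hk, ShortComplex.moduleCat_exact_iff]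
  exact fun h => hrange (h x hx)

lemma Fin.contractNth_comp_swap {α : Type*} {n : ℕ} (op : α → α → α) (j : Fin n)
    (g : Fin (n + 1) → α) (h : op (g j.succ) (g j.castSucc) = op (g j.castSucc) (g j.succ)) :
    contractNth j.castSucc op (g ∘ swap j.castSucc j.succ) = contractNth j.castSucc op g := by
  funext i
  rcases lt_trichotomy i j with hi | rfl | hi
  · rw [contractNth_apply_of_lt _ _ _ _ hi, contractNth_apply_of_lt _ _ _ _ hi, Function.comp_apply,
      swap_apply_of_ne_of_ne (castSucc_lt_castSucc_iff.2 hi).ne (castSucc_lt_succ_iff.2 hi.le).ne]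
  · rw [contractNth_apply_of_eq _ _ _ _ rfl, contractNth_apply_of_eq _ _ _ _ rfl]
    simpa using h
  · rw [contractNth_apply_of_gt _ _ _ _ hi, contractNth_apply_of_gt _ _ _ _ hi, Function.comp_apply,
      swap_apply_of_ne_of_ne (castSucc_lt_succ_iff.2 hi.le).ne' (succ_lt_succ_iff.2 hi).ne']

namespace Equiv.Perm

variable {ι M : Type*} [Fintype ι] [DecidableEq ι] [AddCommGroup M]

lemma sum_sign_smul_eq_zero_of_mul_swap {F : Perm ι → M} {a b : ι} (hab : a ≠ b)
    (hF : ∀ σ, F (σ * swap a b) = F σ) : ∑ σ, sign σ • F σ = 0 :=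
  sum_involution (fun σ _ => σ * swap a b)
    (fun σ _ => by simp [hF, sign_swap hab])
    (fun σ _ _ => (not_congr mul_swap_eq_iff).mpr hab) (fun _ _ => mem_univ _)
    (fun σ _ => mul_swap_involutive a b σ)

lemma sum_sign_smul_mul_right (τ : Perm ι) (F : Perm ι → M) :
    ∑ σ, sign σ • F (σ * τ) = sign τ • ∑ σ, sign σ • F σ := by
  rw [smul_sum]
  refine Fintype.sum_equiv (Equiv.mulRight τ) _ _ fun σ => ?_
  rw [coe_mulRight, map_mul, smul_smul, ← mul_assoc, mul_right_comm, Int.units_mul_self, one_mul]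

end Equiv.Perm

namespace groupCohomology

universe u

variable {k G : Type u} [CommRing k] [Group G] {n : ℕ}

/-- The cup product `φ 0 ∪ ⋯ ∪ φ (n - 1)` of the `1`-cocycles `φ i`. -/
def cupCochain (φ : Fin n → Additive G →+ k) : (Fin n → G) → k :=
  fun g => ∏ i, φ i (.ofMul (g i))

lemma d_cupCochain (φ : Fin n → Additive G →+ k) :
    inhomogeneousCochains.d (Rep.trivial k G k) n (cupCochain φ) = 0 := by
  ext g
  set A : ℕ → k := fun t =>
    ∏ i : Fin n, φ i (.ofMul (if (i : ℕ) < t then g i.castSucc else g i.succ))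
  -- By additivity of `φ j` the `j`-th inner face is `A j + A (j + 1)`, so the faces telescope.
  have face_zero : cupCochain φ (fun i => g i.succ) = A 0 := by simp [A, cupCochain]
  have face_inner (j : Fin n) :
      cupCochain φ (Fin.contractNth j.castSucc (· * ·) g) = A j + A (j + 1) := by
    refine (prod_add_prod_eq (mem_univ j) ?_ (fun i _ hij => ?_) (fun i _ hij => ?_)).symm
    · simp [Fin.contractNth_apply_of_eq, add_comm]
    all_goals
      have hij : (i : ℕ) ≠ j := Fin.val_ne_of_ne hij
      simp only [Fin.contractNth, Fin.val_castSucc]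
      split_ifs <;> first | rfl | omega
  have face_last : cupCochain φ (Fin.contractNth (Fin.last n) (· * ·) g) = A n := by
    refine prod_congr rfl fun i _ => ?_
    rw [Fin.contractNth_apply_of_lt _ _ _ _ (by simp), if_pos i.isLt]
  have telescope : ∑ j ∈ range n, (-1 : k) ^ (j + 1) • (A j + A (j + 1)) =
      (-1) ^ n * A n - A 0 := by
    have := sum_range_sub (fun t => (-1 : k) ^ t * A t) n
    rw [pow_zero, one_mul] at this
    rw [← this]
    refine sum_congr rfl fun j _ => ?_
    rw [smul_eq_mul]
    ring
  simp only [inhomogeneousCochains.d_hom_apply, Representation.trivial_apply,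
    Fin.sum_univ_castSucc, face_zero, face_inner, face_last, Fin.val_castSucc, Fin.val_last,
    Fin.sum_univ_eq_sum_range (fun j => (-1 : k) ^ (j + 1) • (A j + A (j + 1))), telescope]
  rw [smul_eq_mul, Pi.zero_apply]
  ring

/-- Evaluation on the image under `x` of the fundamental cycle of the `n`-torus. -/
def torusPairing (x : Fin n → G) (f : (Fin n → G) → k) : k :=
  ∑ σ : Perm (Fin n), Perm.sign σ • f (x ∘ σ)

lemma torusPairing_cupCochain (x : Fin n → G) (φ : Fin n → Additive G →+ k) :
    torusPairing x (cupCochain φ) = (Matrix.of fun a b => φ b (.ofMul (x a))).det := by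
  rw [Matrix.det_apply]
  rfl

lemma torusPairing_d_eq_zero {x : Fin (n + 1) → G} (hx : Pairwise fun i j => Commute (x i) (x j))
    (y : (Fin n → G) → k) :
    torusPairing x (inhomogeneousCochains.d (Rep.trivial k G k) n y) = 0 := by
  -- Inner faces cancel between `σ` and `σ * swap`; the last face is the first one up to
  -- the rotation `finRotate`, of sign `(-1) ^ n`.
  have inner_face (j : Fin n) :
      ∑ σ : Perm (Fin (n + 1)),
        Perm.sign σ • y (Fin.contractNth j.castSucc (· * ·) (x ∘ σ)) = 0 := by
    have hj : j.castSucc ≠ j.succ := Fin.castSucc_lt_succ.ne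
    refine Perm.sum_sign_smul_eq_zero_of_mul_swap hj fun σ => ?_
    rw [Perm.coe_mul, ← Function.comp_assoc, Fin.contractNth_comp_swap]
    exact (hx (σ.injective.ne hj)).eq.symm
  have last_face : ∑ σ : Perm (Fin (n + 1)), Perm.sign σ • y (fun i => x (σ i.succ)) =
      Perm.sign (finRotate (n + 1)) •
        ∑ σ : Perm (Fin (n + 1)),
          Perm.sign σ • y (Fin.contractNth (Fin.last n) (· * ·) (x ∘ σ)) := by
    rw [← Perm.sum_sign_smul_mul_right]
    refine sum_congr rfl fun σ _ => ?_
    congr 2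
    funext i
    rw [Fin.contractNth_apply_of_lt _ _ _ _ (by simp), Function.comp_apply, Perm.coe_mul,
      Function.comp_apply, finRotate_apply, Fin.coeSucc_eq_succ]
  simp only [torusPairing, inhomogeneousCochains.d_hom_apply, Representation.trivial_apply,
    smul_add, smul_sum, sum_add_distrib, Fin.sum_univ_castSucc]
  rw [sum_comm]
  simp only [smul_comm (Perm.sign _) ((-1 : k) ^ _), ← smul_sum, Function.comp_apply, inner_face,
    last_face]
  rw [sign_finRotate, Nat.add_sub_cancel]
  simp only [smul_zero, sum_const_zero, zero_add, Fin.val_last]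
  rw [Units.smul_def, Units.val_pow_eq_pow_val, Units.val_neg, Units.val_one]
  module

lemma not_isZero_of_torusPairing_ne_zero {x : Fin n → G}
    (hx : Pairwise fun i j => Commute (x i) (x j)) {f : (Fin n → G) → k}
    (hf : inhomogeneousCochains.d (Rep.trivial k G k) n f = 0) (hfx : torusPairing x f ≠ 0) :
    ¬ IsZero (groupCohomology (Rep.trivial k G k) n) := by
  have hcocycle : (inhomogeneousCochains (Rep.trivial k G k)).d n (n + 1) f = 0 := by
    rwa [inhomogeneousCochains.d_def]
  cases n with
  | zero =>
    refine HomologicalComplex.not_isZero_homology_of_notMem_range _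
      CochainComplex.prev_nat_zero (CochainComplex.next ℕ 0) hcocycle ?_
    rintro ⟨y, rfl⟩
    rw [HomologicalComplex.shape _ _ _ (by simp)] at hfx
    exact hfx (sum_eq_zero fun σ _ => smul_zero _)
  | succ n =>
    refine HomologicalComplex.not_isZero_homology_of_notMem_range _
      (CochainComplex.prev_nat_succ n) (CochainComplex.next ℕ _) hcocycle ?_
    rintro ⟨y, rfl⟩
    rw [inhomogeneousCochains.d_def] at hfx
    exact hfx (torusPairing_d_eq_zero hx y)

end groupCohomology

namespace RAAG

variable {V : Type} {Γ : SimpleGraph V}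

lemma commute_of_adj {v w : V} (h : Γ.Adj v w) :
    Commute (PresentedGroup.of v : RAAG Γ) (PresentedGroup.of w) := by
  have hrel := PresentedGroup.one_of_mem (rels := raagRels Γ) ⟨v, w, h, rfl⟩
  simp only [map_mul, map_inv] at hrel
  exact commutatorElement_eq_one_iff_mul_comm.mp hrel

def lift {H : Type*} [CommGroup H] (f : V → H) : RAAG Γ →* H :=
  PresentedGroup.toGroup (f := f) <| by
    rintro _ ⟨v, w, -, rfl⟩
    simp

def exponentSum [DecidableEq V] (u : V) : Additive (RAAG Γ) →+ ℤ :=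
  MonoidHom.toAdditiveLeft (lift fun w => Multiplicative.ofAdd ((Pi.single u 1 : V → ℤ) w))

lemma exponentSum_of [DecidableEq V] (u w : V) :
    exponentSum u (.ofMul (PresentedGroup.of w : RAAG Γ)) = (Pi.single u 1 : V → ℤ) w := by
  simp [exponentSum, lift]

end RAAG

open CategoryTheory Limits in
theorem raag_cohomology_nonzero_at_cliqueNum_general {V : Type}
    (Γ : SimpleGraph V) (m : ℕ)
    (hclique : ∃ s : Finset V, Γ.IsNClique m s) :
    ¬ IsZero (groupCohomology (Rep.trivial ℤ (RAAG Γ) ℤ) m) := by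
  classical
  obtain ⟨s, hs⟩ := hclique
  let v : Fin m → V := fun i => (s.equivFinOfCardEq hs.card_eq).symm i
  have hv : Function.Injective v := Subtype.val_injective.comp (Equiv.injective _)
  have hcomm : Pairwise fun i j => Commute (PresentedGroup.of (v i) : RAAG Γ) (.of (v j)) :=
    fun i j hij => RAAG.commute_of_adj (hs.isClique (by simp [v]) (by simp [v]) (hv.ne hij))
  refine groupCohomology.not_isZero_of_torusPairing_ne_zero hcomm
    (groupCohomology.d_cupCochain fun i => RAAG.exponentSum (v i)) ?_
  have hI : (Matrix.of fun a b => RAAG.exponentSum (v b) (.ofMul (.of (v a) : RAAG Γ))) = 1 := by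
    ext a b
    simp [RAAG.exponentSum_of, Matrix.one_apply, Pi.single_apply, hv.eq_iff]
  rw [groupCohomology.torusPairing_cupCochain, hI, Matrix.det_one]
  exact one_ne_zero

open CategoryTheory Limits in
/-- If the finite simple graph `Γ` has clique number `m`, then the group cohomology of
`A_Γ` in degree `m` with coefficients in `ℤ` (trivial action) is nonzero:
`H^m(A_Γ; ℤ) ≠ 0`. Together with the vanishing above degree `m`, this says the
cohomological dimension of `A_Γ` equals the clique number of `Γ`, i.e. the dimension
of the Salvetti complex. -/
theorem raag_cohomology_nonzero_at_cliqueNum {V : Type} [Fintype V]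
    (Γ : SimpleGraph V) (m : ℕ)
    (hclique : ∃ s : Finset V, Γ.IsNClique m s)
    (hmax : ∀ s : Finset V, Γ.IsClique (↑s : Set V) → s.card ≤ m) :
    ¬ IsZero (groupCohomology (Rep.trivial ℤ (RAAG Γ) ℤ) m) :=
  raag_cohomology_nonzero_at_cliqueNum_general Γ m hclique
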